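/- arXiv:2106.08247 — 5 statements merged into one kernel-verified Lean document; each statement's English description precedes it below -/
import Mathlib

section
/- (Correlation Superposition Theorem, trace form.) Let X_sC ∈ ℝ^{N×p}, X_rC ∈ ℝ^{N×q}, Y_C ∈ ℝ^{N×m} be given, and let X_C = (X_sC, X_rC) ∈ ℝ^{N×(p+q)} be their horizontal concatenation. Suppose: (i) Y_C = V·B for some V ∈ ℝ^{N×m} and invertible m×m matrix B; (ii) X_sC = W_s·A_s for some W_s ∈ ℝ^{N×p} and invertible p×p matrix A_s; (iii) X_rC = W_s·C + W_r·D for some W_r ∈ ℝ^{N×q}, C ∈ ℝ^{p×q}, and invertible q×q matrix D; (iv) W_sᵀ·W_r = 0; and (v) the matrices X_Cᵀ·X_C, Y_Cᵀ·Y_C, W_sᵀ·W_s, W_rᵀ·W_r, and Vᵀ·V are invertible. Then tr((X_CᵀX_C)⁻¹ X_CᵀY_C (Y_CᵀY_C)⁻¹ Y_CᵀX_C) = tr((W_sᵀW_s)⁻¹ W_sᵀV (VᵀV)⁻¹ VᵀW_s) + tr((W_rᵀW_r)⁻¹ W_rᵀV (VᵀV)⁻¹ VᵀW_r). -/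
/-!
Both sides are traces of products of orthogonal projectors: the left side is `tr (P_X P_Y)`,
the right side is `tr (P_{W_s} P_V) + tr (P_{W_r} P_V)`. A projector `P_X = X (XᵀX)⁻¹ Xᵀ` only
depends on the column space of `X`, so `P_Y = P_V`, and `P_X = P_W` for `W = (W_s, W_r)` because
`X = W T` with `T` block upper triangular and invertible. Orthogonality of `W_s` and `W_r` makes
`WᵀW` block diagonal, whence `P_W = P_{W_s} + P_{W_r}`, and the trace splits.
-/

open Matrix

namespace Matrix

variable {o n k R : Type*} [Fintype o] [Fintype n] [Fintype k] [DecidableEq n] [DecidableEq k]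
  [CommRing R]

/-- The orthogonal projector onto the column space of `X`; it is `0` when `Xᵀ * X` is singular. -/
noncomputable def orthProj (X : Matrix o n R) : Matrix o o R := X * (Xᵀ * X)⁻¹ * Xᵀ

theorem trace_canonicalCorrelation_eq_trace_orthProj_mul (X : Matrix o n R) (Y : Matrix o k R) :
    trace ((Xᵀ * X)⁻¹ * Xᵀ * Y * (Yᵀ * Y)⁻¹ * Yᵀ * X) = trace (orthProj X * orthProj Y) := by
  rw [trace_mul_comm]
  simp only [orthProj, Matrix.mul_assoc]

theorem orthProj_mul_of_isUnit (X : Matrix o n R) {T : Matrix n n R} (hT : IsUnit T) :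
    orthProj (X * T) = orthProj X := by
  have hTdet : IsUnit T.det := (isUnit_iff_isUnit_det T).mp hT
  have hTtdet : IsUnit Tᵀ.det := by rwa [det_transpose]
  have hGram : (X * T)ᵀ * (X * T) = Tᵀ * (Xᵀ * X) * T := by
    simp only [transpose_mul, Matrix.mul_assoc]
  rw [orthProj, orthProj, hGram, mul_inv_rev, mul_inv_rev, transpose_mul]
  simp only [Matrix.mul_assoc]
  rw [mul_nonsing_inv_cancel_left _ _ hTdet, nonsing_inv_mul_cancel_left _ _ hTtdet]

variable {p q : Type*}

theorem transpose_fromCols_mul_fromCols_of_orthogonal {Ws : Matrix o p R} {Wr : Matrix o q R}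
    (horth : Wsᵀ * Wr = 0) :
    (fromCols Ws Wr)ᵀ * fromCols Ws Wr = fromBlocks (Wsᵀ * Ws) 0 0 (Wrᵀ * Wr) := by
  have horth' : Wrᵀ * Ws = 0 := by
    rw [← transpose_transpose (Wrᵀ * Ws), transpose_mul, transpose_transpose, horth,
      transpose_zero]
  rw [transpose_fromCols, fromRows_mul_fromCols, horth, horth']

variable [Fintype p] [Fintype q] [DecidableEq p] [DecidableEq q]

theorem orthProj_fromCols_of_orthogonal {Ws : Matrix o p R} {Wr : Matrix o q R}
    (horth : Wsᵀ * Wr = 0) (hWs : IsUnit (Wsᵀ * Ws)) (hWr : IsUnit (Wrᵀ * Wr)) :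
    orthProj (fromCols Ws Wr) = orthProj Ws + orthProj Wr := by
  rw [orthProj, transpose_fromCols_mul_fromCols_of_orthogonal horth,
    inv_fromBlocks_zero₂₁_of_isUnit_iff _ _ _ (iff_of_true hWs hWr), transpose_fromCols,
    fromCols_mul_fromBlocks, fromCols_mul_fromRows]
  simp [orthProj]

end Matrix

theorem correlation_superposition_general {N p q m : ℕ}
    (Xs : Matrix (Fin N) (Fin p) ℝ) (Xr : Matrix (Fin N) (Fin q) ℝ)
    (Y : Matrix (Fin N) (Fin m) ℝ)
    (V : Matrix (Fin N) (Fin m) ℝ) (B : Matrix (Fin m) (Fin m) ℝ)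
    (Ws : Matrix (Fin N) (Fin p) ℝ) (As : Matrix (Fin p) (Fin p) ℝ)
    (Wr : Matrix (Fin N) (Fin q) ℝ) (C : Matrix (Fin p) (Fin q) ℝ)
    (D : Matrix (Fin q) (Fin q) ℝ)
    (hB : IsUnit B) (hAs : IsUnit As) (hD : IsUnit D)
    (hY : Y = V * B) (hXs : Xs = Ws * As) (hXr : Xr = Ws * C + Wr * D)
    (horth : Wsᵀ * Wr = 0)
    (hWs : IsUnit (Wsᵀ * Ws)) (hWr : IsUnit (Wrᵀ * Wr)) :
    trace (((fromCols Xs Xr)ᵀ * fromCols Xs Xr)⁻¹ * (fromCols Xs Xr)ᵀ * Y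
        * (Yᵀ * Y)⁻¹ * Yᵀ * fromCols Xs Xr)
      = trace ((Wsᵀ * Ws)⁻¹ * Wsᵀ * V * (Vᵀ * V)⁻¹ * Vᵀ * Ws)
        + trace ((Wrᵀ * Wr)⁻¹ * Wrᵀ * V * (Vᵀ * V)⁻¹ * Vᵀ * Wr) := by
  have hX : fromCols Xs Xr = fromCols Ws Wr * fromBlocks As C 0 D := by
    simp [fromCols_mul_fromBlocks, hXs, hXr]
  have hT : IsUnit (fromBlocks As C 0 D) := isUnit_fromBlocks_zero₂₁.mpr ⟨hAs, hD⟩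
  simp only [trace_canonicalCorrelation_eq_trace_orthProj_mul]
  rw [hX, hY, orthProj_mul_of_isUnit _ hT, orthProj_mul_of_isUnit _ hB,
    orthProj_fromCols_of_orthogonal horth hWs hWr, Matrix.add_mul, trace_add]

/-- Correlation Superposition Theorem (trace form). -/
theorem correlation_superposition {N p q m : ℕ}
    (Xs : Matrix (Fin N) (Fin p) ℝ) (Xr : Matrix (Fin N) (Fin q) ℝ)
    (Y : Matrix (Fin N) (Fin m) ℝ)
    (V : Matrix (Fin N) (Fin m) ℝ) (B : Matrix (Fin m) (Fin m) ℝ)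
    (Ws : Matrix (Fin N) (Fin p) ℝ) (As : Matrix (Fin p) (Fin p) ℝ)
    (Wr : Matrix (Fin N) (Fin q) ℝ) (C : Matrix (Fin p) (Fin q) ℝ)
    (D : Matrix (Fin q) (Fin q) ℝ)
    (hB : IsUnit B) (hAs : IsUnit As) (hD : IsUnit D)
    (hY : Y = V * B) (hXs : Xs = Ws * As) (hXr : Xr = Ws * C + Wr * D)
    (horth : Wsᵀ * Wr = 0)
    (hXX : IsUnit ((fromCols Xs Xr)ᵀ * fromCols Xs Xr))
    (hYY : IsUnit (Yᵀ * Y))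
    (hWs : IsUnit (Wsᵀ * Ws)) (hWr : IsUnit (Wrᵀ * Wr)) (hV : IsUnit (Vᵀ * V)) :
    trace (((fromCols Xs Xr)ᵀ * fromCols Xs Xr)⁻¹ * (fromCols Xs Xr)ᵀ * Y
        * (Yᵀ * Y)⁻¹ * Yᵀ * fromCols Xs Xr)
      = trace ((Wsᵀ * Ws)⁻¹ * Wsᵀ * V * (Vᵀ * V)⁻¹ * Vᵀ * Ws)
        + trace ((Wrᵀ * Wr)⁻¹ * Wrᵀ * V * (Vᵀ * V)⁻¹ * Vᵀ * Wr) :=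
  correlation_superposition_general Xs Xr Y V B Ws As Wr C D hB hAs hD hY hXs hXr horth hWs hWr
end

section
/- (Maximum Correlation Theorem, trace form.) Let X_C ∈ ℝ^{N×n} and Y_C ∈ ℝ^{N×m}. Suppose X_C = W·A where W ∈ ℝ^{N×n} has pairwise orthogonal nonzero columns w_1,…,w_n and A is an invertible n×n matrix, Y_C = V·B where V ∈ ℝ^{N×m} has pairwise orthogonal nonzero columns v_1,…,v_m and B is an invertible m×m matrix, and X_CᵀX_C and Y_CᵀY_C are invertible. Then tr((X_CᵀX_C)⁻¹ X_CᵀY_C (Y_CᵀY_C)⁻¹ Y_CᵀX_C) = Σ_{i=1}^{n} Σ_{j=1}^{m} (w_iᵀv_j)² / ((w_iᵀw_i)(v_jᵀv_j)). -/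
open Matrix

/-- Maximum Correlation Theorem (trace form): the sum of squared canonical correlation
coefficients decomposes as a double sum of squared cosines (h-correlations) over pairs of
orthogonal basis columns. -/
theorem maximum_correlation {N n m : ℕ}
    (X : Matrix (Fin N) (Fin n) ℝ) (Y : Matrix (Fin N) (Fin m) ℝ)
    (W : Matrix (Fin N) (Fin n) ℝ) (A : Matrix (Fin n) (Fin n) ℝ)
    (V : Matrix (Fin N) (Fin m) ℝ) (B : Matrix (Fin m) (Fin m) ℝ)
    (hA : IsUnit A) (hB : IsUnit B)
    (hX : X = W * A) (hY : Y = V * B)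
    (hWorth : ∀ i j : Fin n, i ≠ j → Wᵀ i ⬝ᵥ Wᵀ j = 0) (hWne : ∀ i : Fin n, Wᵀ i ≠ 0)
    (hVorth : ∀ i j : Fin m, i ≠ j → Vᵀ i ⬝ᵥ Vᵀ j = 0) (hVne : ∀ j : Fin m, Vᵀ j ≠ 0)
    (hXX : IsUnit (Xᵀ * X)) (hYY : IsUnit (Yᵀ * Y)) :
    trace ((Xᵀ * X)⁻¹ * Xᵀ * Y * (Yᵀ * Y)⁻¹ * Yᵀ * X)
      = ∑ i : Fin n, ∑ j : Fin m,
          (Wᵀ i ⬝ᵥ Vᵀ j) ^ 2 / ((Wᵀ i ⬝ᵥ Wᵀ i) * (Vᵀ j ⬝ᵥ Vᵀ j)) := by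
  set d : Fin n → ℝ := fun i => Wᵀ i ⬝ᵥ Wᵀ i with hd
  set e : Fin m → ℝ := fun j => Vᵀ j ⬝ᵥ Vᵀ j with he
  have hdne : ∀ i, d i ≠ 0 := fun i h => hWne i (dotProduct_self_eq_zero.mp h)
  have hene : ∀ j, e j ≠ 0 := fun j h => hVne j (dotProduct_self_eq_zero.mp h)
  have hD : Wᵀ * W = Matrix.diagonal d := by
    ext i j
    by_cases hij : i = j
    · subst hij
      simp [Matrix.mul_apply, hd, dotProduct, Matrix.transpose_apply]
    · simp only [Matrix.mul_apply, Matrix.diagonal_apply_ne _ hij]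
      simpa [dotProduct, Matrix.transpose_apply] using hWorth i j hij
  have hE : Vᵀ * V = Matrix.diagonal e := by
    ext i j
    by_cases hij : i = j
    · subst hij
      simp [Matrix.mul_apply, he, dotProduct, Matrix.transpose_apply]
    · simp only [Matrix.mul_apply, Matrix.diagonal_apply_ne _ hij]
      simpa [dotProduct, Matrix.transpose_apply] using hVorth i j hij
  have hXX' : Xᵀ * X = Aᵀ * Matrix.diagonal d * A := by
    rw [hX, Matrix.transpose_mul, Matrix.mul_assoc, ← Matrix.mul_assoc Wᵀ W A, hD,
      ← Matrix.mul_assoc]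
  have hYY' : Yᵀ * Y = Bᵀ * Matrix.diagonal e * B := by
    rw [hY, Matrix.transpose_mul, Matrix.mul_assoc, ← Matrix.mul_assoc Vᵀ V B, hE,
      ← Matrix.mul_assoc]
  have hAd : IsUnit A.det := (Matrix.isUnit_iff_isUnit_det A).mp hA
  have hBd : IsUnit B.det := (Matrix.isUnit_iff_isUnit_det B).mp hB
  have hATd : IsUnit Aᵀ.det := by rwa [Matrix.det_transpose]
  have hBTd : IsUnit Bᵀ.det := by rwa [Matrix.det_transpose]
  have hXXinv : (Xᵀ * X)⁻¹ = A⁻¹ * (Matrix.diagonal d)⁻¹ * Aᵀ⁻¹ := by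
    rw [hXX', Matrix.mul_inv_rev, Matrix.mul_inv_rev, Matrix.mul_assoc]
  have hYYinv : (Yᵀ * Y)⁻¹ = B⁻¹ * (Matrix.diagonal e)⁻¹ * Bᵀ⁻¹ := by
    rw [hYY', Matrix.mul_inv_rev, Matrix.mul_inv_rev, Matrix.mul_assoc]
  have key : (Xᵀ * X)⁻¹ * Xᵀ * Y * (Yᵀ * Y)⁻¹ * Yᵀ * X
      = A⁻¹ * ((Matrix.diagonal d)⁻¹ * ((Wᵀ * V) * ((Matrix.diagonal e)⁻¹ * ((Vᵀ * W) * A)))) := by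
    rw [hXXinv, hYYinv, hX, hY, Matrix.transpose_mul, Matrix.transpose_mul]
    simp only [Matrix.mul_assoc]
    rw [Matrix.nonsing_inv_mul_cancel_left _ _ hATd,
      Matrix.mul_nonsing_inv_cancel_left _ _ hBd,
      Matrix.nonsing_inv_mul_cancel_left _ _ hBTd]
  rw [key, Matrix.trace_mul_comm]
  have hcancel : (Matrix.diagonal d)⁻¹ * ((Wᵀ * V) * ((Matrix.diagonal e)⁻¹ * ((Vᵀ * W) * A))) * A⁻¹
      = (Matrix.diagonal d)⁻¹ * ((Wᵀ * V) * ((Matrix.diagonal e)⁻¹ * (Vᵀ * W))) := by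
    simp only [Matrix.mul_assoc]
    rw [Matrix.mul_nonsing_inv _ hAd, Matrix.mul_one]
  have hDinv : (Matrix.diagonal d)⁻¹ = Matrix.diagonal (fun i => (d i)⁻¹) :=
    Matrix.inv_eq_right_inv (by
      rw [Matrix.diagonal_mul_diagonal,
        show (fun i => d i * (d i)⁻¹) = fun _ => (1 : ℝ) from
          funext fun i => mul_inv_cancel₀ (hdne i), Matrix.diagonal_one])
  have hEinv : (Matrix.diagonal e)⁻¹ = Matrix.diagonal (fun j => (e j)⁻¹) :=
    Matrix.inv_eq_right_inv (by
      rw [Matrix.diagonal_mul_diagonal,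
        show (fun j => e j * (e j)⁻¹) = fun _ => (1 : ℝ) from
          funext fun j => mul_inv_cancel₀ (hene j), Matrix.diagonal_one])
  rw [hcancel, hDinv, hEinv]
  have hMij : ∀ (i : Fin n) (j : Fin m), (Wᵀ * V) i j = Wᵀ i ⬝ᵥ Vᵀ j := by
    intro i j
    simp [Matrix.mul_apply, dotProduct, Matrix.transpose_apply]
  set M : Matrix (Fin n) (Fin m) ℝ := Wᵀ * V with hM
  have hVWt : Vᵀ * W = Mᵀ := by rw [hM, Matrix.transpose_mul, Matrix.transpose_transpose]
  rw [hVWt, Matrix.trace]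
  simp only [Matrix.diag_apply, Matrix.mul_apply, Matrix.transpose_apply, Matrix.diagonal_apply,
    ite_mul, zero_mul, mul_ite, mul_zero, Finset.sum_ite_eq, Finset.sum_ite_eq',
    Finset.mem_univ, if_true]
  refine Finset.sum_congr rfl fun i _ => ?_
  rw [Finset.mul_sum]
  refine Finset.sum_congr rfl fun j _ => ?_
  rw [hMij i j, div_eq_mul_inv, mul_inv]
  ring
end

section
/- (Angle Superposition Theorem, trace form.) Let X_sC ∈ ℝ^{N×p}, X_rC ∈ ℝ^{N×q}, Y_C ∈ ℝ^{N×m}, and X_C = (X_sC, X_rC). Suppose: (i) U ∈ ℝ^{N×z} satisfies UᵀU = I_z, and X_sC = U·F_s, X_rC = U·F_r, Y_C = U·F_Y for F_s ∈ ℝ^{z×p}, F_r ∈ ℝ^{z×q}, F_Y ∈ ℝ^{z×m}; (ii) F_Y = V·B for some V ∈ ℝ^{z×m} and invertible m×m matrix B; (iii) F_s = W_s·A_s for some W_s ∈ ℝ^{z×p} and invertible p×p matrix A_s; (iv) F_r = W_s·C + W_r·D for some W_r ∈ ℝ^{z×q}, C ∈ ℝ^{p×q}, and invertible q×q matrix D;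 (v) W_sᵀ·W_r = 0; (vi) X_CᵀX_C, Y_CᵀY_C, W_sᵀW_s, W_rᵀW_r, and VᵀV are invertible. Then tr((X_CᵀX_C)⁻¹ X_CᵀY_C (Y_CᵀY_C)⁻¹ Y_CᵀX_C) = tr((W_sᵀW_s)⁻¹ W_sᵀV (VᵀV)⁻¹ VᵀW_s) + tr((W_rᵀW_r)⁻¹ W_rᵀV (VᵀV)⁻¹ VᵀW_r). -/
open Matrix

/-!
The trace `tr((XᵀX)⁻¹ XᵀY (YᵀY)⁻¹ YᵀX)` equals `tr(P_X P_Y)`, where `P_X = X (XᵀX)⁻¹ Xᵀ` is the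
orthogonal projection onto the column space of `X`; it also depends on `X` and `Y` only through
the Gram matrices `XᵀX`, `XᵀY`, `YᵀY`. Hence it is unchanged when `X` and `Y` are multiplied on
the left by `U` with `UᵀU = 1`, or on the right by invertible matrices. Since
`X_C = U (W_s, W_r) [[A_s, C], [0, D]]` and `Y_C = U V B`, the left-hand side becomes the trace for
`(W_s, W_r)` and `V`. Finally `W_sᵀ W_r = 0` makes the Gram matrix of `(W_s, W_r)` block diagonal,
so `P_(W_s, W_r) = P_{W_s} + P_{W_r}` and the trace splits.
-/

namespace Matrix

theorem transpose_mul_mul_of_transpose_mul_eq_one {R n z k l : Type*} [CommRing R]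
    [Fintype n] [Fintype z] [DecidableEq z] {U : Matrix n z R} (hU : Uᵀ * U = 1)
    (P : Matrix z k R) (Q : Matrix z l R) :
    (U * P)ᵀ * (U * Q) = Pᵀ * Q := by
  rw [transpose_mul, Matrix.mul_assoc, ← Matrix.mul_assoc Uᵀ, hU, Matrix.one_mul]

variable {R : Type*} [CommRing R] {n k l : Type*} [Fintype n] [Fintype k] [Fintype l]
  [DecidableEq k] [DecidableEq l]

noncomputable def sumSqCanonicalCorr (X : Matrix n k R) (Y : Matrix n l R) : R :=
  trace ((Xᵀ * X)⁻¹ * Xᵀ * Y * (Yᵀ * Y)⁻¹ * Yᵀ * X)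

noncomputable def colProj (X : Matrix n k R) : Matrix n n R :=
  X * (Xᵀ * X)⁻¹ * Xᵀ

theorem sumSqCanonicalCorr_eq_trace_colProj_mul (X : Matrix n k R) (Y : Matrix n l R) :
    sumSqCanonicalCorr X Y = trace (colProj X * colProj Y) := by
  rw [sumSqCanonicalCorr, colProj, colProj, trace_mul_comm]
  simp only [Matrix.mul_assoc]

theorem sumSqCanonicalCorr_eq_trace_gram (X : Matrix n k R) (Y : Matrix n l R) :
    sumSqCanonicalCorr X Y = trace ((Xᵀ * X)⁻¹ * (Xᵀ * Y) * (Yᵀ * Y)⁻¹ * (Yᵀ * X)) := by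
  simp only [sumSqCanonicalCorr, Matrix.mul_assoc]

theorem sumSqCanonicalCorr_mul_left {z : Type*} [Fintype z] [DecidableEq z]
    {U : Matrix n z R} (hU : Uᵀ * U = 1) (X : Matrix z k R) (Y : Matrix z l R) :
    sumSqCanonicalCorr (U * X) (U * Y) = sumSqCanonicalCorr X Y := by
  simp only [sumSqCanonicalCorr_eq_trace_gram, transpose_mul_mul_of_transpose_mul_eq_one hU]

theorem colProj_mul_of_isUnit (X : Matrix n k R) {T : Matrix k k R} (hT : IsUnit T) :
    colProj (X * T) = colProj X := by
  have hTdet := (isUnit_iff_isUnit_det T).mp hT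
  have hTtdet : IsUnit Tᵀ.det := by rwa [det_transpose]
  rw [colProj, colProj, transpose_mul,
    show Tᵀ * Xᵀ * (X * T) = Tᵀ * (Xᵀ * X) * T by simp only [Matrix.mul_assoc],
    mul_inv_rev, mul_inv_rev]
  simp only [Matrix.mul_assoc, mul_nonsing_inv_cancel_left _ _ hTdet,
    nonsing_inv_mul_cancel_left _ _ hTtdet]

theorem sumSqCanonicalCorr_mul_of_isUnit (X : Matrix n k R) (Y : Matrix n l R)
    {T : Matrix k k R} {S : Matrix l l R} (hT : IsUnit T) (hS : IsUnit S) :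
    sumSqCanonicalCorr (X * T) (Y * S) = sumSqCanonicalCorr X Y := by
  simp only [sumSqCanonicalCorr_eq_trace_colProj_mul, colProj_mul_of_isUnit _ hT,
    colProj_mul_of_isUnit _ hS]

theorem colProj_fromCols_of_transpose_mul_eq_zero {k' : Type*} [Fintype k'] [DecidableEq k']
    {Ws : Matrix n k R} {Wr : Matrix n k' R} (horth : Wsᵀ * Wr = 0)
    (hs : IsUnit (Wsᵀ * Ws)) (hr : IsUnit (Wrᵀ * Wr)) :
    colProj (fromCols Ws Wr) = colProj Ws + colProj Wr := by
  have horth' : Wrᵀ * Ws = 0 := by simpa using congrArg transpose horth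
  rw [colProj, transpose_fromCols, fromRows_mul_fromCols, horth, horth',
    inv_fromBlocks_zero₂₁_of_isUnit_iff _ _ _ (iff_of_true hs hr)]
  simp [fromCols_mul_fromBlocks, fromCols_mul_fromRows, colProj]

theorem sumSqCanonicalCorr_fromCols_of_transpose_mul_eq_zero {k' : Type*} [Fintype k']
    [DecidableEq k']
    {Ws : Matrix n k R} {Wr : Matrix n k' R} (horth : Wsᵀ * Wr = 0)
    (hs : IsUnit (Wsᵀ * Ws)) (hr : IsUnit (Wrᵀ * Wr)) (V : Matrix n l R) :
    sumSqCanonicalCorr (fromCols Ws Wr) V =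
      sumSqCanonicalCorr Ws V + sumSqCanonicalCorr Wr V := by
  simp only [sumSqCanonicalCorr_eq_trace_colProj_mul,
    colProj_fromCols_of_transpose_mul_eq_zero horth hs hr, Matrix.add_mul, trace_add]

end Matrix

theorem angle_superposition_general {N z p q m : ℕ}
    (Xs : Matrix (Fin N) (Fin p) ℝ) (Xr : Matrix (Fin N) (Fin q) ℝ)
    (Y : Matrix (Fin N) (Fin m) ℝ)
    (U : Matrix (Fin N) (Fin z) ℝ) (hU : Uᵀ * U = 1)
    (Fs : Matrix (Fin z) (Fin p) ℝ) (Fr : Matrix (Fin z) (Fin q) ℝ)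
    (FY : Matrix (Fin z) (Fin m) ℝ)
    (hXs : Xs = U * Fs) (hXr : Xr = U * Fr) (hY : Y = U * FY)
    (V : Matrix (Fin z) (Fin m) ℝ) (B : Matrix (Fin m) (Fin m) ℝ) (hB : IsUnit B)
    (hFY : FY = V * B)
    (Ws : Matrix (Fin z) (Fin p) ℝ) (As : Matrix (Fin p) (Fin p) ℝ) (hAs : IsUnit As)
    (hFs : Fs = Ws * As)
    (Wr : Matrix (Fin z) (Fin q) ℝ) (C : Matrix (Fin p) (Fin q) ℝ)
    (D : Matrix (Fin q) (Fin q) ℝ) (hD : IsUnit D)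
    (hFr : Fr = Ws * C + Wr * D)
    (horth : Wsᵀ * Wr = 0)
    (hWs : IsUnit (Wsᵀ * Ws)) (hWr : IsUnit (Wrᵀ * Wr)) :
    trace (((fromCols Xs Xr)ᵀ * fromCols Xs Xr)⁻¹ * (fromCols Xs Xr)ᵀ * Y
        * (Yᵀ * Y)⁻¹ * Yᵀ * fromCols Xs Xr)
      = trace ((Wsᵀ * Ws)⁻¹ * Wsᵀ * V * (Vᵀ * V)⁻¹ * Vᵀ * Ws)
        + trace ((Wrᵀ * Wr)⁻¹ * Wrᵀ * V * (Vᵀ * V)⁻¹ * Vᵀ * Wr) := by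
  have hX : fromCols Xs Xr = U * (fromCols Ws Wr * fromBlocks As C 0 D) := by
    rw [fromCols_mul_fromBlocks, mul_fromCols, hXs, hXr, hFs, hFr]
    simp
  have hT : IsUnit (fromBlocks As C 0 D) := isUnit_fromBlocks_zero₂₁.mpr ⟨hAs, hD⟩
  change sumSqCanonicalCorr (fromCols Xs Xr) Y =
    sumSqCanonicalCorr Ws V + sumSqCanonicalCorr Wr V
  rw [hX, hY, hFY, sumSqCanonicalCorr_mul_left hU, sumSqCanonicalCorr_mul_of_isUnit _ _ hT hB,
    sumSqCanonicalCorr_fromCols_of_transpose_mul_eq_zero horth hWs hWr]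

/-- Angle Superposition Theorem (trace form). -/
theorem angle_superposition {N z p q m : ℕ}
    (Xs : Matrix (Fin N) (Fin p) ℝ) (Xr : Matrix (Fin N) (Fin q) ℝ)
    (Y : Matrix (Fin N) (Fin m) ℝ)
    (U : Matrix (Fin N) (Fin z) ℝ) (hU : Uᵀ * U = 1)
    (Fs : Matrix (Fin z) (Fin p) ℝ) (Fr : Matrix (Fin z) (Fin q) ℝ)
    (FY : Matrix (Fin z) (Fin m) ℝ)
    (hXs : Xs = U * Fs) (hXr : Xr = U * Fr) (hY : Y = U * FY)
    (V : Matrix (Fin z) (Fin m) ℝ) (B : Matrix (Fin m) (Fin m) ℝ) (hB : IsUnit B)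
    (hFY : FY = V * B)
    (Ws : Matrix (Fin z) (Fin p) ℝ) (As : Matrix (Fin p) (Fin p) ℝ) (hAs : IsUnit As)
    (hFs : Fs = Ws * As)
    (Wr : Matrix (Fin z) (Fin q) ℝ) (C : Matrix (Fin p) (Fin q) ℝ)
    (D : Matrix (Fin q) (Fin q) ℝ) (hD : IsUnit D)
    (hFr : Fr = Ws * C + Wr * D)
    (horth : Wsᵀ * Wr = 0)
    (hXX : IsUnit ((fromCols Xs Xr)ᵀ * fromCols Xs Xr))
    (hYY : IsUnit (Yᵀ * Y))
    (hWs : IsUnit (Wsᵀ * Ws)) (hWr : IsUnit (Wrᵀ * Wr)) (hV : IsUnit (Vᵀ * V)) :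
    trace (((fromCols Xs Xr)ᵀ * fromCols Xs Xr)⁻¹ * (fromCols Xs Xr)ᵀ * Y
        * (Yᵀ * Y)⁻¹ * Yᵀ * fromCols Xs Xr)
      = trace ((Wsᵀ * Ws)⁻¹ * Wsᵀ * V * (Vᵀ * V)⁻¹ * Vᵀ * Ws)
        + trace ((Wrᵀ * Wr)⁻¹ * Wrᵀ * V * (Vᵀ * V)⁻¹ * Vᵀ * Wr) :=
  angle_superposition_general Xs Xr Y U hU Fs Fr FY hXs hXr hY V B hB hFY Ws As hAs hFs Wr C D hD
    hFr horth hWs hWr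
end

section
/- Let W_s ∈ ℝ^{N×p}, W_r ∈ ℝ^{N×q}, and V ∈ ℝ^{N×m}, with W_sᵀ·W_r = 0, and suppose W_sᵀW_s, W_rᵀW_r, and VᵀV are invertible. Let W = (W_s, W_r) be the horizontal concatenation. Then tr((WᵀW)⁻¹ WᵀV (VᵀV)⁻¹ VᵀW) = tr((W_sᵀW_s)⁻¹ W_sᵀV (VᵀV)⁻¹ VᵀW_s) + tr((W_rᵀW_r)⁻¹ W_rᵀV (VᵀV)⁻¹ VᵀW_r). -/
/-!
Orthogonality of the blocks makes the Gram matrix of `W = (W_s, W_r)` block diagonal, so its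
inverse is block diagonal too, and the trace of `(WᵀW)⁻¹ Wᵀ M W` picks out the two diagonal
blocks `(W_sᵀW_s)⁻¹ W_sᵀ M W_s` and `(W_rᵀW_r)⁻¹ W_rᵀ M W_r`; take `M = V (VᵀV)⁻¹ Vᵀ`.
-/

open Matrix

namespace Matrix

variable {R : Type*} {l m n : Type*}

theorem trace_fromBlocks [AddCommMonoid R] [Fintype m] [Fintype n] (A : Matrix m m R)
    (B : Matrix m n R) (C : Matrix n m R) (D : Matrix n n R) :
    trace (fromBlocks A B C D) = trace A + trace D := by
  simp [trace, Fintype.sum_sum_type]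

variable [CommRing R]

theorem transpose_fromCols_mul_fromCols_of_orthogonal_s9 [Fintype l] {A : Matrix l m R}
    {B : Matrix l n R} (hAB : Aᵀ * B = 0) :
    (fromCols A B)ᵀ * fromCols A B = fromBlocks (Aᵀ * A) 0 0 (Bᵀ * B) := by
  have hBA : Bᵀ * A = 0 := by simpa using congrArg transpose hAB
  rw [transpose_fromCols, fromRows_mul_fromCols, hAB, hBA]

variable [Fintype m] [Fintype n] [DecidableEq m] [DecidableEq n]

theorem inv_fromBlocks_zero_zero_of_isUnit_iff (A : Matrix m m R) (D : Matrix n n R)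
    (hAD : IsUnit A ↔ IsUnit D) :
    (fromBlocks A 0 0 D)⁻¹ = fromBlocks A⁻¹ 0 0 D⁻¹ := by
  simp [inv_fromBlocks_zero₂₁_of_isUnit_iff A 0 D hAD]

theorem trace_gram_inv_mul_fromCols_of_orthogonal [Fintype l] {A : Matrix l m R}
    {B : Matrix l n R} (hAB : Aᵀ * B = 0) (hunit : IsUnit (Aᵀ * A) ↔ IsUnit (Bᵀ * B))
    (M : Matrix l l R) :
    trace (((fromCols A B)ᵀ * fromCols A B)⁻¹ * ((fromCols A B)ᵀ * (M * fromCols A B)))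
      = trace ((Aᵀ * A)⁻¹ * (Aᵀ * (M * A))) + trace ((Bᵀ * B)⁻¹ * (Bᵀ * (M * B))) := by
  rw [transpose_fromCols_mul_fromCols_of_orthogonal_s9 hAB,
    inv_fromBlocks_zero_zero_of_isUnit_iff _ _ hunit, transpose_fromCols, mul_fromCols,
    fromRows_mul_fromCols, fromBlocks_multiply, trace_fromBlocks]
  simp

end Matrix

theorem ssc_orthogonal_split_general {N p q m : ℕ}
    (Ws : Matrix (Fin N) (Fin p) ℝ) (Wr : Matrix (Fin N) (Fin q) ℝ)
    (V : Matrix (Fin N) (Fin m) ℝ)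
    (horth : Wsᵀ * Wr = 0)
    (hWs : IsUnit (Wsᵀ * Ws)) (hWr : IsUnit (Wrᵀ * Wr)) :
    trace (((fromCols Ws Wr)ᵀ * fromCols Ws Wr)⁻¹ * (fromCols Ws Wr)ᵀ * V
        * (Vᵀ * V)⁻¹ * Vᵀ * fromCols Ws Wr)
      = trace ((Wsᵀ * Ws)⁻¹ * Wsᵀ * V * (Vᵀ * V)⁻¹ * Vᵀ * Ws)
        + trace ((Wrᵀ * Wr)⁻¹ * Wrᵀ * V * (Vᵀ * V)⁻¹ * Vᵀ * Wr) := by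
  simpa only [Matrix.mul_assoc] using
    trace_gram_inv_mul_fromCols_of_orthogonal horth (iff_of_true hWs hWr) (V * (Vᵀ * V)⁻¹ * Vᵀ)

/-- For orthogonal blocks `W_s ⊥ W_r`, the SSC of the concatenation `(W_s, W_r)` with `V`
splits as the sum of the SSCs of each block with `V`. -/
theorem ssc_orthogonal_split {N p q m : ℕ}
    (Ws : Matrix (Fin N) (Fin p) ℝ) (Wr : Matrix (Fin N) (Fin q) ℝ)
    (V : Matrix (Fin N) (Fin m) ℝ)
    (horth : Wsᵀ * Wr = 0)
    (hWs : IsUnit (Wsᵀ * Ws)) (hWr : IsUnit (Wrᵀ * Wr)) (hVV : IsUnit (Vᵀ * V)) :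
    trace (((fromCols Ws Wr)ᵀ * fromCols Ws Wr)⁻¹ * (fromCols Ws Wr)ᵀ * V
        * (Vᵀ * V)⁻¹ * Vᵀ * fromCols Ws Wr)
      = trace ((Wsᵀ * Ws)⁻¹ * Wsᵀ * V * (Vᵀ * V)⁻¹ * Vᵀ * Ws)
        + trace ((Wrᵀ * Wr)⁻¹ * Wrᵀ * V * (Vᵀ * V)⁻¹ * Vᵀ * Wr) :=
  ssc_orthogonal_split_general Ws Wr V horth hWs hWr
end

section
/- (Greedy-search decomposition.) Let W_s ∈ ℝ^{N×p}, let w ∈ ℝ^N satisfy W_sᵀ·w = 0 and wᵀw ≠ 0, and let V ∈ ℝ^{N×m}, with W_sᵀW_s and VᵀV invertible. Let W = (W_s, w) be the matrix obtained by appending w as a new column to W_s. Then tr((WᵀW)⁻¹ WᵀV (VᵀV)⁻¹ VᵀW) = tr((W_sᵀW_s)⁻¹ W_sᵀV (VᵀV)⁻¹ VᵀW_s) + (wᵀV (VᵀV)⁻¹ Vᵀw) / (wᵀw); that is, when a candidate feature is orthogonalised against the already-selected features, the sum of squared canonical correlation coefficients decomposes as the previous sum plus the squared multiple correlation of the orthogonalised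 candidate with V. -/
/-!
Since `Wsᵀ w = 0`, the Gram matrix of `W = (Ws, w)` is block diagonal, so the hat matrix
`W (WᵀW)⁻¹ Wᵀ` is the sum of the hat matrices of `Ws` and of `w`. By cyclicity of the trace,
`tr((WᵀW)⁻¹ Wᵀ P W) = tr(W (WᵀW)⁻¹ Wᵀ P)` is therefore additive in the two column blocks, and for
the single column `w` it equals `wᵀ P w / wᵀ w`.
-/

open Matrix

namespace Matrix

variable {K : Type*} [Field K] {n k l : Type*} [Fintype n]

theorem trace_inv_gram_mul [Fintype k] [DecidableEq k] (W : Matrix n k K) (P : Matrix n n K) :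
    trace ((Wᵀ * W)⁻¹ * Wᵀ * P * W) = trace (W * (Wᵀ * W)⁻¹ * Wᵀ * P) := by
  rw [trace_mul_comm]
  simp only [Matrix.mul_assoc]

theorem transpose_fromCols_mul_fromCols_of_transpose_mul_eq_zero (A : Matrix n k K)
    (B : Matrix n l K) (hAB : Aᵀ * B = 0) :
    (fromCols A B)ᵀ * fromCols A B = fromBlocks (Aᵀ * A) 0 0 (Bᵀ * B) := by
  rw [transpose_fromCols, fromRows_mul_fromCols, hAB, ← transpose_transpose (Bᵀ * A),
    transpose_mul, transpose_transpose, hAB, transpose_zero]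

section OrthogonalBlocks

variable [Fintype k] [Fintype l] [DecidableEq k] [DecidableEq l]
  {A : Matrix n k K} {B : Matrix n l K}

theorem fromCols_mul_inv_gram_mul_transpose (hAB : Aᵀ * B = 0) (hA : IsUnit (Aᵀ * A))
    (hB : IsUnit (Bᵀ * B)) :
    fromCols A B * ((fromCols A B)ᵀ * fromCols A B)⁻¹ * (fromCols A B)ᵀ
      = A * (Aᵀ * A)⁻¹ * Aᵀ + B * (Bᵀ * B)⁻¹ * Bᵀ := by
  rw [transpose_fromCols_mul_fromCols_of_transpose_mul_eq_zero A B hAB,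
    inv_fromBlocks_zero₂₁_of_isUnit_iff _ _ _ (iff_of_true hA hB), fromCols_mul_fromBlocks,
    transpose_fromCols, fromCols_mul_fromRows]
  simp

theorem trace_fromCols_inv_gram_mul (hAB : Aᵀ * B = 0) (hA : IsUnit (Aᵀ * A))
    (hB : IsUnit (Bᵀ * B)) (P : Matrix n n K) :
    trace (((fromCols A B)ᵀ * fromCols A B)⁻¹ * (fromCols A B)ᵀ * P * fromCols A B)
      = trace ((Aᵀ * A)⁻¹ * Aᵀ * P * A) + trace ((Bᵀ * B)⁻¹ * Bᵀ * P * B) := by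
  simp only [trace_inv_gram_mul, fromCols_mul_inv_gram_mul_transpose hAB hA hB, Matrix.add_mul,
    trace_add]

end OrthogonalBlocks

theorem transpose_replicateCol_mul_replicateCol (w : n → K) :
    (replicateCol Unit w)ᵀ * replicateCol Unit w = scalar Unit (w ⬝ᵥ w) := by
  ext
  simp [transpose_replicateCol]

theorem isUnit_transpose_replicateCol_mul_replicateCol {w : n → K} (hw : w ⬝ᵥ w ≠ 0) :
    IsUnit ((replicateCol Unit w)ᵀ * replicateCol Unit w) := by
  rw [transpose_replicateCol_mul_replicateCol, isUnit_iff_isUnit_det]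
  simpa using hw

theorem trace_replicateCol_inv_gram_mul (w : n → K) (P : Matrix n n K) :
    trace (((replicateCol Unit w)ᵀ * replicateCol Unit w)⁻¹ * (replicateCol Unit w)ᵀ * P
      * replicateCol Unit w) = (w ⬝ᵥ P *ᵥ w) / (w ⬝ᵥ w) := by
  rw [transpose_replicateCol_mul_replicateCol]
  simp only [trace, Finset.univ_unique, PUnit.default_eq_unit, scalar_apply, inv_subsingleton,
    diagonal_apply_eq, Ring.inverse_eq_inv', transpose_replicateCol, diag_apply,
    Finset.sum_singleton, div_eq_inv_mul]
  rw [Matrix.mul_assoc, Matrix.mul_assoc, ← replicateCol_mulVec, diagonal_mul,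
    replicateRow_mul_replicateCol_apply]

end Matrix

theorem greedy_search_decomposition_general {N p m : ℕ}
    (Ws : Matrix (Fin N) (Fin p) ℝ) (w : Fin N → ℝ)
    (V : Matrix (Fin N) (Fin m) ℝ)
    (horth : Wsᵀ.mulVec w = 0) (hw : w ⬝ᵥ w ≠ 0)
    (hWs : IsUnit (Wsᵀ * Ws))
    (W : Matrix (Fin N) (Fin p ⊕ Unit) ℝ)
    (hW : W = fromCols Ws (Matrix.of fun i (_ : Unit) => w i)) :
    trace ((Wᵀ * W)⁻¹ * Wᵀ * V * (Vᵀ * V)⁻¹ * Vᵀ * W)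
      = trace ((Wsᵀ * Ws)⁻¹ * Wsᵀ * V * (Vᵀ * V)⁻¹ * Vᵀ * Ws)
        + (w ⬝ᵥ (V * (Vᵀ * V)⁻¹ * Vᵀ).mulVec w) / (w ⬝ᵥ w) := by
  replace hW : W = fromCols Ws (replicateCol Unit w) := hW
  subst hW
  have hWsw : Wsᵀ * replicateCol Unit w = 0 := by
    rw [← replicateCol_mulVec, horth, replicateCol_zero]
  have key := trace_fromCols_inv_gram_mul hWsw hWs
    (isUnit_transpose_replicateCol_mul_replicateCol hw) (V * (Vᵀ * V)⁻¹ * Vᵀ)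
  rw [trace_replicateCol_inv_gram_mul] at key
  simpa only [Matrix.mul_assoc] using key

/-- Greedy-search decomposition: appending a column `w` orthogonal to `W_s` adds its squared
multiple correlation with `V` to the sum of squared canonical correlation coefficients. -/
theorem greedy_search_decomposition {N p m : ℕ}
    (Ws : Matrix (Fin N) (Fin p) ℝ) (w : Fin N → ℝ)
    (V : Matrix (Fin N) (Fin m) ℝ)
    (horth : Wsᵀ.mulVec w = 0) (hw : w ⬝ᵥ w ≠ 0)
    (hWs : IsUnit (Wsᵀ * Ws)) (hVV : IsUnit (Vᵀ * V))
    (W : Matrix (Fin N) (Fin p ⊕ Unit) ℝ)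
    (hW : W = fromCols Ws (Matrix.of fun i (_ : Unit) => w i)) :
    trace ((Wᵀ * W)⁻¹ * Wᵀ * V * (Vᵀ * V)⁻¹ * Vᵀ * W)
      = trace ((Wsᵀ * Ws)⁻¹ * Wsᵀ * V * (Vᵀ * V)⁻¹ * Vᵀ * Ws)
        + (w ⬝ᵥ (V * (Vᵀ * V)⁻¹ * Vᵀ).mulVec w) / (w ⬝ᵥ w) :=
  greedy_search_decomposition_general Ws w V horth hw hWs W hW
end
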